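/- If X is a graph-measurable random set in a separable Banach space X, then its polar set X^o(ω) = {u ∈ X* : sup_{x∈X(ω)} ⟨u,x⟩ ≤ 1} is a random closed convex set in the dual space X* equipped with the weak-star topology (which is Polish since X is separable). -/

import Mathlib

/-!
Closedness and convexity hold because the polar is an intersection of weak-star closed
half-spaces `{u | u x ≤ 1}`.

For measurability, fix a countable basis of `X`. A functional `u` lies outside `X°(ω)` iff some
basic open set `b` meets `X(ω)` and `u ≥ 1` on `b`: a nonzero functional is an open map, so
`u ≥ 1` on an open set forces `u > 1` there. For fixed `b` the set of such `u` is weak-star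
closed, and `{ω | X(ω) ∩ b ≠ ∅}` is the projection of a measurable subset of `Ω × X`, which is
measurable because `P` is complete. That projection theorem reduces, through a measurable map
`Ω → ℕ → Bool`, to the null-measurability of analytic sets, and an analytic set `f(ℕ^ℕ)` is
approximated from inside by the compact images `f(∏ [0, mᵢ])`.
-/

open MeasureTheory Set Function Filter Topology
open scoped ENNReal

namespace MeasureTheory

def prefixBoundedBy (m : ℕ → ℕ) (k : ℕ) : Set (ℕ → ℕ) := {σ | ∀ i < k, σ i ≤ m i}

section PrefixBoundedBy

variable {m : ℕ → ℕ} {k : ℕ}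

@[simp]
lemma prefixBoundedBy_zero (m : ℕ → ℕ) : prefixBoundedBy m 0 = univ := by
  ext σ; simp [prefixBoundedBy]

lemma prefixBoundedBy_congr {m' : ℕ → ℕ} (h : ∀ i < k, m i = m' i) :
    prefixBoundedBy m k = prefixBoundedBy m' k := by
  ext σ
  exact forall₂_congr fun i hi => by rw [h i hi]

lemma antitone_prefixBoundedBy (m : ℕ → ℕ) : Antitone (prefixBoundedBy m) :=
  fun _ _ hkl _ hσ i hi => hσ i (hi.trans_le hkl)

lemma monotone_prefixBoundedBy_update (m : ℕ → ℕ) (k : ℕ) :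
    Monotone fun n => prefixBoundedBy (update m k n) (k + 1) := by
  intro a b hab σ hσ i hi
  rcases eq_or_ne i k with rfl | hik
  · simpa using (hσ i hi).trans (by simpa using hab)
  · simpa [hik] using hσ i hi

lemma iUnion_prefixBoundedBy_update (m : ℕ → ℕ) (k : ℕ) :
    ⋃ n, prefixBoundedBy (update m k n) (k + 1) = prefixBoundedBy m k := by
  ext σ
  simp only [mem_iUnion, prefixBoundedBy, mem_ofPred_eq]
  constructor
  · rintro ⟨n, h⟩ i hi
    simpa [hi.ne] using h i (by omega)
  · intro h
    refine ⟨σ k, fun i hi => ?_⟩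
    rcases eq_or_ne i k with rfl | hik
    · simp
    · simpa [hik] using h i (by omega)

/-- Clamping `σ k` below `m` changes only coordinates `≥ k`, so a limit of the clamped
sequences in the compact box `∏ [0, m i]` is also a limit of a subsequence of `σ`. -/
lemma exists_tendsto_subseq_of_mem_prefixBoundedBy {σ : ℕ → ℕ → ℕ}
    (hσ : ∀ k, σ k ∈ prefixBoundedBy m k) :
    ∃ a ∈ univ.pi (fun i => Iic (m i)), ∃ ψ : ℕ → ℕ, StrictMono ψ ∧
      Tendsto (σ ∘ ψ) atTop (𝓝 a) := by
  set τ : ℕ → ℕ → ℕ := fun k i => min (σ k i) (m i)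
  have hτ : ∀ k, τ k ∈ univ.pi (fun i => Iic (m i)) :=
    fun k i _ => mem_Iic.2 (min_le_right _ _)
  obtain ⟨a, ha, ψ, hψ, hτψ⟩ :=
    (isCompact_univ_pi fun i => (finite_Iic (m i)).isCompact).tendsto_subseq hτ
  refine ⟨a, ha, ψ, hψ, tendsto_pi_nhds.2 fun i => ?_⟩
  refine (tendsto_pi_nhds.1 hτψ i).congr' ?_
  filter_upwards [eventually_gt_atTop i] with j hj
  exact min_eq_left (hσ (ψ j) i (hj.trans_le hψ.le_apply))

lemma iInter_closure_image_prefixBoundedBy_subset {α : Type*} [TopologicalSpace α]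
    [TopologicalSpace.MetrizableSpace α] {f : (ℕ → ℕ) → α} (hf : Continuous f) (m : ℕ → ℕ) :
    ⋂ k, closure (f '' prefixBoundedBy m k) ⊆ f '' univ.pi (fun i => Iic (m i)) := by
  let := TopologicalSpace.metrizableSpaceMetric α
  intro y hy
  have hclose : ∀ k : ℕ, ∃ σ ∈ prefixBoundedBy m k, dist y (f σ) < 1 / (k + 1) := fun k => by
    obtain ⟨_, ⟨σ, hσ, rfl⟩, hd⟩ :=
      Metric.mem_closure_iff.1 (mem_iInter.1 hy k) (1 / (k + 1)) Nat.one_div_pos_of_nat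
    exact ⟨σ, hσ, hd⟩
  choose σ hσ hσy using hclose
  have hfσ : Tendsto (fun k => f (σ k)) atTop (𝓝 y) :=
    tendsto_iff_dist_tendsto_zero.2 <| squeeze_zero (fun _ => dist_nonneg)
      (fun k => by rw [dist_comm]; exact (hσy k).le) tendsto_one_div_add_atTop_nhds_zero_nat
  obtain ⟨a, ha, ψ, hψ, hσa⟩ := exists_tendsto_subseq_of_mem_prefixBoundedBy hσ
  exact ⟨a, ha, tendsto_nhds_unique ((hf.tendsto a).comp hσa) (hfσ.comp hψ.tendsto_atTop)⟩

end PrefixBoundedBy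

/-- The König-type step: `f '' prefixBoundedBy m k` is the increasing union over `n` of the
images with `m k` replaced by `n`, so one of them still has measure `> c`. -/
lemma exists_forall_lt_measure_image_prefixBoundedBy {α : Type*} [MeasurableSpace α]
    (μ : Measure α) (f : (ℕ → ℕ) → α) {c : ℝ≥0∞} (hc : c < μ (range f)) :
    ∃ m, ∀ k, c < μ (f '' prefixBoundedBy m k) := by
  have step : ∀ k v, c < μ (f '' prefixBoundedBy v k) →
      ∃ n, c < μ (f '' prefixBoundedBy (update v k n) (k + 1)) := by
    intro k v hv
    have hmono : Monotone fun n => f '' prefixBoundedBy (update v k n) (k + 1) :=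
      fun _ _ h => image_mono (monotone_prefixBoundedBy_update v k h)
    rwa [← iUnion_prefixBoundedBy_update, image_iUnion, hmono.measure_iUnion, lt_iSup_iff] at hv
  choose! pick hpick using step
  let v : ℕ → ℕ → ℕ := fun k => Nat.rec 0 (fun k vk => update vk k (pick k vk)) k
  have hv : ∀ k, c < μ (f '' prefixBoundedBy (v k) k) := by
    intro k
    induction k with
    | zero => simpa using hc
    | succ k ih => exact hpick k (v k) ih
  have hv_stable : ∀ k, ∀ i < k, v k i = v (i + 1) i := by
    intro k
    induction k with
    | zero => intro i hi; omega
    | succ k ih =>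
      intro i hi
      rcases (Nat.lt_succ_iff_lt_or_eq.1 hi) with hik | rfl
      · rw [← ih i hik]; exact update_of_ne hik.ne _ _
      · rfl
  exact ⟨fun i => v (i + 1) i, fun k => (prefixBoundedBy_congr (hv_stable k)).symm ▸ hv k⟩

variable {α : Type*} [TopologicalSpace α] [TopologicalSpace.MetrizableSpace α]
  [MeasurableSpace α] [OpensMeasurableSpace α]

theorem AnalyticSet.exists_isCompact_subset_le_measure (μ : Measure α) [IsFiniteMeasure μ]
    {T : Set α} (hT : AnalyticSet T) {c : ℝ≥0∞} (hc : c < μ T) :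
    ∃ K ⊆ T, IsCompact K ∧ c ≤ μ K := by
  rw [AnalyticSet] at hT
  obtain rfl | ⟨f, hf, rfl⟩ := hT
  · simp at hc
  obtain ⟨m, hm⟩ := exists_forall_lt_measure_image_prefixBoundedBy μ f hc
  refine ⟨f '' univ.pi (fun i => Iic (m i)), image_subset_range _ _,
    (isCompact_univ_pi fun i => (finite_Iic (m i)).isCompact).image hf, ?_⟩
  have hanti : Antitone fun k => closure (f '' prefixBoundedBy m k) :=
    fun _ _ hkl => closure_mono (image_mono (antitone_prefixBoundedBy m hkl))
  calc c ≤ ⨅ k, μ (closure (f '' prefixBoundedBy m k)) :=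
        le_iInf fun k => (hm k).le.trans (measure_mono subset_closure)
    _ = μ (⋂ k, closure (f '' prefixBoundedBy m k)) :=
        (hanti.measure_iInter (fun _ => isClosed_closure.nullMeasurableSet)
          ⟨0, measure_ne_top μ _⟩).symm
    _ ≤ _ := measure_mono (iInter_closure_image_prefixBoundedBy_subset hf m)

theorem AnalyticSet.nullMeasurableSet (μ : Measure α) [IsFiniteMeasure μ] {T : Set α}
    (hT : AnalyticSet T) : NullMeasurableSet T μ := by
  rcases eq_zero_or_pos (μ T) with hT0 | hTpos
  · exact NullMeasurableSet.of_null hT0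
  obtain ⟨u, -, hu, hu_lim⟩ := exists_seq_strictMono_tendsto' hTpos
  choose K hKT hK hKμ using fun n => hT.exists_isCompact_subset_le_measure μ (hu n).2
  have hB : MeasurableSet (⋃ n, K n) := .iUnion fun n => (hK n).isClosed.measurableSet
  have hμB : μ T ≤ μ (⋃ n, K n) :=
    le_of_tendsto' hu_lim fun n => (hKμ n).trans (measure_mono (subset_iUnion K n))
  exact hB.nullMeasurableSet.congr
    (ae_eq_of_subset_of_measure_ge (iUnion_subset hKT) hμB hB.nullMeasurableSet
      (measure_ne_top μ T))

end MeasureTheory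

section CantorRepresentation

variable {Ω β : Type*} [MeasurableSpace Ω] [MeasurableSpace β]

/-- Countably many maps into `ℕ → Bool` are interleaved into one, via `Nat.pair`. -/
lemma exists_prodMap_preimage_eq_iUnion {φ : ℕ → Ω → ℕ → Bool}
    {s : ℕ → Set ((ℕ → Bool) × β)} (hφ : ∀ k, Measurable (φ k)) (hs : ∀ k, MeasurableSet (s k)) :
    ∃ (ψ : Ω → ℕ → Bool) (t : Set ((ℕ → Bool) × β)), Measurable ψ ∧ MeasurableSet t ∧
      Prod.map ψ id ⁻¹' t = ⋃ k, Prod.map (φ k) id ⁻¹' s k := by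
  let ψ : Ω → ℕ → Bool := fun ω n => φ (Nat.unpair n).1 ω (Nat.unpair n).2
  let slice : ℕ → (ℕ → Bool) → ℕ → Bool := fun k b j => b (Nat.pair k j)
  have hsection : ∀ k, Measurable (slice k) := fun k =>
    measurable_pi_lambda _ fun j => measurable_pi_apply _
  have hψ : ∀ k, slice k ∘ ψ = φ k := fun k => by
    funext ω j; simp [slice, ψ]
  refine ⟨ψ, ⋃ k, Prod.map (slice k) id ⁻¹' s k,
    measurable_pi_lambda _ fun n => (measurable_pi_apply _).comp (hφ _),
    .iUnion fun k => ((hsection k).prodMap measurable_id) (hs k), ?_⟩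
  simp only [preimage_iUnion, ← preimage_comp, Prod.map_comp_map, hψ, id_comp]

theorem MeasurableSet.exists_prodMap_preimage_eq {s : Set (Ω × β)} (hs : MeasurableSet s) :
    ∃ (φ : Ω → ℕ → Bool) (s' : Set ((ℕ → Bool) × β)), Measurable φ ∧ MeasurableSet s' ∧
      Prod.map φ id ⁻¹' s' = s := by
  let M : MeasurableSpace (Ω × β) :=
    { MeasurableSet' := fun t => ∃ (φ : Ω → ℕ → Bool) (s' : Set ((ℕ → Bool) × β)),
        Measurable φ ∧ MeasurableSet s' ∧ Prod.map φ id ⁻¹' s' = t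
      measurableSet_empty := ⟨fun _ _ => false, ∅, measurable_const, .empty, rfl⟩
      measurableSet_compl := by
        rintro t ⟨φ, s', hφ, hs', rfl⟩
        exact ⟨φ, s'ᶜ, hφ, hs'.compl, rfl⟩
      measurableSet_iUnion := by
        intro t ht
        choose φ s' hφ hs' hφs' using ht
        simp only [← hφs']
        exact exists_prodMap_preimage_eq_iUnion hφ hs' }
  have hfst : MeasurableSpace.comap Prod.fst ‹MeasurableSpace Ω› ≤ M := by
    rintro t ⟨A, hA, rfl⟩
    classical
    refine ⟨fun ω _ => decide (ω ∈ A), {p | p.1 0 = true},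
      measurable_pi_lambda _ fun _ => measurable_to_bool (by simpa [preimage] using hA),
      measurableSet_eq_fun ((measurable_pi_apply 0).comp measurable_fst) measurable_const, ?_⟩
    ext p; simp
  have hsnd : MeasurableSpace.comap Prod.snd ‹MeasurableSpace β› ≤ M := by
    rintro t ⟨A, hA, rfl⟩
    exact ⟨fun _ _ => false, Prod.snd ⁻¹' A, measurable_const, measurable_snd hA, rfl⟩
  exact sup_le hfst hsnd s hs

end CantorRepresentation

theorem MeasurableSet.image_fst_of_isComplete {Ω β : Type*} [MeasurableSpace Ω]
    [MeasurableSpace β] [StandardBorelSpace β] (μ : Measure Ω) [IsFiniteMeasure μ] [μ.IsComplete]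
    {s : Set (Ω × β)} (hs : MeasurableSet s) : MeasurableSet (Prod.fst '' s) := by
  obtain ⟨φ, s', hφ, hs', rfl⟩ := hs.exists_prodMap_preimage_eq
  have himage : Prod.fst '' (Prod.map φ id ⁻¹' s') = φ ⁻¹' (Prod.fst '' s') := by
    ext ω
    constructor
    · rintro ⟨⟨ω, x⟩, hp, rfl⟩
      exact ⟨_, hp, rfl⟩
    · rintro ⟨⟨_, x⟩, hp, rfl⟩
      exact ⟨(ω, x), hp, rfl⟩
  rw [himage]
  exact ((hs'.analyticSet_image measurable_fst).nullMeasurableSet (μ.map φ)).preimage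
    (hφ.quasiMeasurePreserving μ) |>.measurable_of_complete

namespace WeakDual

variable {E : Type*} [AddCommGroup E] [TopologicalSpace E] [Module ℝ E]

/-- The polar `X°` of the paper; unlike `WeakDual.polar`, it bounds `u x` and not `‖u x‖`. -/
def oneSidedPolar (s : Set E) : Set (WeakDual ℝ E) := {u | ∀ x ∈ s, u x ≤ 1}

theorem isClosed_oneSidedPolar (s : Set E) : IsClosed (oneSidedPolar s) := by
  simp only [oneSidedPolar, ofPred_forall]
  exact isClosed_biInter fun x _ => isClosed_le (eval_continuous x) continuous_const

theorem convex_oneSidedPolar (s : Set E) : Convex ℝ (oneSidedPolar s) := by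
  simp only [oneSidedPolar, ofPred_forall]
  exact convex_iInter₂ fun x _ =>
    convex_halfSpace_le ⟨fun _ _ => rfl, fun _ _ => rfl⟩ (1 : ℝ)

end WeakDual

section Polar

open TopologicalSpace WeakDual

variable {X : Type*} [AddCommGroup X] [Module ℝ X] [TopologicalSpace X] [ContinuousAdd X]
  [ContinuousSMul ℝ X]

theorem StrongDual.lt_of_forall_le_of_isOpen {f : StrongDual ℝ X} (hf : f ≠ 0) {U : Set X}
    (hU : IsOpen U) {a : ℝ} (hfU : ∀ y ∈ U, a ≤ f y) {x : X} (hx : x ∈ U) : a < f x := by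
  rw [← mem_Ioi, ← interior_Ici]
  exact interior_maximal (image_subset_iff.2 hfU) (f.isOpenMap_of_ne_zero hf U hU)
    (mem_image_of_mem f hx)

theorem TopologicalSpace.IsTopologicalBasis.exists_mem_lt_apply_iff {B : Set (Set X)}
    (hB : IsTopologicalBasis B) (s : Set X) (f : StrongDual ℝ X) {a : ℝ} (ha : 0 < a) :
    (∃ x ∈ s, a < f x) ↔ ∃ b ∈ B, (s ∩ b).Nonempty ∧ ∀ y ∈ b, a ≤ f y := by
  constructor
  · rintro ⟨x, hxs, hx⟩
    obtain ⟨b, hbB, hxb, hb⟩ :=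
      hB.exists_subset_of_mem_open hx (isOpen_lt continuous_const f.continuous)
    exact ⟨b, hbB, ⟨x, hxs, hxb⟩, fun y hy => (hb hy).out.le⟩
  · rintro ⟨b, hbB, ⟨x, hxs, hxb⟩, hb⟩
    have hf : f ≠ 0 := by
      rintro rfl
      exact (hb x hxb).not_gt ha
    exact ⟨x, hxs, StrongDual.lt_of_forall_le_of_isOpen hf (hB.isOpen hbB) hb hxb⟩

theorem measurableSet_setOf_mem_oneSidedPolar {Ω : Type*} [MeasurableSpace Ω] [PolishSpace X]
    [MeasurableSpace X] [BorelSpace X] [MeasurableSpace (WeakDual ℝ X)]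
    [OpensMeasurableSpace (WeakDual ℝ X)] (μ : Measure Ω) [IsFiniteMeasure μ] [μ.IsComplete]
    {C : Ω → Set X} (hC : MeasurableSet {p : Ω × X | p.2 ∈ C p.1}) :
    MeasurableSet {p : Ω × WeakDual ℝ X | p.2 ∈ oneSidedPolar (C p.1)} := by
  have hcompl : {p : Ω × WeakDual ℝ X | p.2 ∈ oneSidedPolar (C p.1)}ᶜ =
      ⋃ b ∈ countableBasis X,
        {ω | (C ω ∩ b).Nonempty} ×ˢ {u : WeakDual ℝ X | ∀ y ∈ b, 1 ≤ u y} := by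
    ext ⟨ω, u⟩
    simp only [oneSidedPolar, mem_compl_iff, mem_ofPred_eq, not_forall, not_le,
      exists_prop, mem_iUnion, mem_prod]
    exact (isBasis_countableBasis X).exists_mem_lt_apply_iff (C ω) (toStrongDual u) one_pos
  refine MeasurableSet.compl_iff.1 (hcompl ▸ .biUnion (countable_countableBasis X) fun b hb => ?_)
  have hE : {ω | (C ω ∩ b).Nonempty} =
      Prod.fst '' ({p : Ω × X | p.2 ∈ C p.1} ∩ Prod.snd ⁻¹' b) := by
    ext ω; simp [Set.Nonempty]
  refine .prod (hE ▸ (hC.inter (measurable_snd ?_)).image_fst_of_isComplete μ) ?_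
  · exact (isOpen_of_mem_countableBasis hb).measurableSet
  · simp only [ofPred_forall]
    exact (isClosed_biInter fun y _ =>
      isClosed_le continuous_const (eval_continuous y)).measurableSet

end Polar

/-- Lemma 3.3: the polar X° of a graph-measurable random set X is a random closed convex
set in the dual space with the weak-star topology. -/
theorem stmt8 {Ω X : Type*} [MeasurableSpace Ω] [NormedAddCommGroup X] [NormedSpace ℝ X]
    [CompleteSpace X] [TopologicalSpace.SeparableSpace X] [MeasurableSpace X] [BorelSpace X]
    [MeasurableSpace (WeakDual ℝ X)] [BorelSpace (WeakDual ℝ X)]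
    (P : Measure Ω) [IsProbabilityMeasure P] (hPc : P.IsComplete)
    (C : Ω → Set X) (hCgr : MeasurableSet {p : Ω × X | p.2 ∈ C p.1}) :
    MeasurableSet {p : Ω × WeakDual ℝ X | ∀ x ∈ C p.1, p.2 x ≤ 1} ∧
    (∀ ω, IsClosed {u : WeakDual ℝ X | ∀ x ∈ C ω, u x ≤ 1}) ∧
    (∀ ω, Convex ℝ {u : WeakDual ℝ X | ∀ x ∈ C ω, u x ≤ 1}) := by
  have := hPc
  exact ⟨measurableSet_setOf_mem_oneSidedPolar P hCgr,
    fun ω => WeakDual.isClosed_oneSidedPolar (C ω),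
    fun ω => WeakDual.convex_oneSidedPolar (C ω)⟩
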